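/- In a pointed Mal'tsev category, for any internal equivalence relation (r₁, r₂) : R ⇉ A with reflexivity splitting e : A → R, the morphism ⟨r₁, r₂⟩ : (R, r₁, e) → (A × A, π₁, ⟨1,1⟩) is a Bourn-normal monomorphism in the category of points Pt(A). -/

import Mathlib

open CategoryTheory CategoryTheory.Limits

universe v u

noncomputable section

variable {C : Type u} [Category.{v} C]

/-- The category of points over `B`: split epimorphisms over `B` with a chosen section. -/
structure Pt (B : C) where
  X : C
  p : X ⟶ B
  s : B ⟶ X
  sec : s ≫ p = 𝟙 B

@[ext]
structure PtHom {B : C} (P Q : Pt B) where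
  hom : P.X ⟶ Q.X
  wp : hom ≫ Q.p = P.p
  ws : P.s ≫ hom = Q.s

attribute [simp] Pt.sec PtHom.wp PtHom.ws

instance {B : C} : Category (Pt B) where
  Hom := PtHom
  id P := ⟨𝟙 P.X, by simp, by simp⟩
  comp f g := ⟨f.hom ≫ g.hom, by rw [Category.assoc, g.wp, f.wp],
    by rw [← Category.assoc, f.ws, g.ws]⟩
  id_comp f := by apply PtHom.ext; exact Category.id_comp f.hom
  comp_id f := by apply PtHom.ext; exact Category.comp_id f.hom
  assoc f g h := by apply PtHom.ext; exact Category.assoc f.hom g.hom h.hom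

@[simp] lemma PtHom.comp_hom {B : C} {P Q R : Pt B} (f : P ⟶ Q) (g : Q ⟶ R) :
    (f ≫ g).hom = f.hom ≫ g.hom := rfl

@[simp] lemma PtHom.id_hom {B : C} (P : Pt B) : (𝟙 P : P ⟶ P).hom = 𝟙 P.X := rfl

variable [HasZeroMorphisms C] [HasFiniteLimits C]

/-- The kernel functor `Pt_C(B) ⥤ C`, sending a point `(A, α, β)` to `Ker α`. -/
def KerF (B : C) : Pt B ⥤ C where
  obj P := kernel P.p
  map {P Q} f := kernel.map P.p Q.p f.hom (𝟙 B) (by simp)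
  map_id P := by
    apply equalizer.hom_ext
    simp [kernel.map]
  map_comp f g := by
    apply equalizer.hom_ext
    simp [kernel.map]

namespace Pt

variable {B : C}

/-- The terminal (indeed zero) object `(B, 1, 1)` of `Pt B`. -/
def zeroPt (B : C) : Pt B := ⟨B, 𝟙 B, 𝟙 B, by simp⟩

instance (P : Pt B) : Unique (P ⟶ zeroPt B) where
  default := ⟨P.p, Category.comp_id _, P.sec⟩
  uniq f := by apply PtHom.ext; exact (Category.comp_id f.hom).symm.trans f.wp

instance (P : Pt B) : Unique (zeroPt B ⟶ P) where
  default := ⟨P.s, P.sec, Category.id_comp _⟩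
  uniq f := by apply PtHom.ext; exact (Category.id_comp f.hom).symm.trans f.ws

instance : HasZeroObject (Pt B) :=
  ⟨⟨zeroPt B, ⟨fun P => ⟨inferInstance⟩, fun P => ⟨inferInstance⟩⟩⟩⟩

instance : HasZeroMorphisms (Pt B) where
  zero P Q := ⟨⟨P.p ≫ Q.s, by rw [Category.assoc, Q.sec, Category.comp_id],
    by rw [← Category.assoc, P.sec, Category.id_comp]⟩⟩
  comp_zero {P Q} f R := by
    apply PtHom.ext
    show f.hom ≫ Q.p ≫ R.s = P.p ≫ R.s
    rw [← Category.assoc, f.wp]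
  zero_comp P {Q R} g := by
    apply PtHom.ext
    show (P.p ≫ Q.s) ≫ g.hom = P.p ≫ R.s
    rw [Category.assoc, g.ws]

instance : HasTerminal (Pt B) := hasTerminal_of_unique (zeroPt B)

section Pullbacks

variable {P Q T : Pt B} (f : P ⟶ T) (g : Q ⟶ T)

/-- The pullback of two morphisms of points, computed in `C`. -/
def pbPt : Pt B where
  X := pullback f.hom g.hom
  p := pullback.fst f.hom g.hom ≫ P.p
  s := pullback.lift P.s Q.s (by rw [f.ws, g.ws])
  sec := by rw [← Category.assoc, pullback.lift_fst, P.sec]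

def pbFst : pbPt f g ⟶ P :=
  ⟨pullback.fst f.hom g.hom, rfl, pullback.lift_fst _ _ _⟩

def pbSnd : pbPt f g ⟶ Q :=
  ⟨pullback.snd f.hom g.hom, by
    show pullback.snd f.hom g.hom ≫ Q.p = pullback.fst f.hom g.hom ≫ P.p
    rw [← f.wp, ← g.wp, ← Category.assoc, ← Category.assoc, pullback.condition],
    pullback.lift_snd _ _ _⟩

lemma pb_cond : pbFst f g ≫ f = pbSnd f g ≫ g := by
  apply PtHom.ext; exact pullback.condition

/-- The cone `pbPt` is a limit cone. -/
def pbIsLimit : IsLimit (PullbackCone.mk _ _ (pb_cond f g)) := by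
  apply PullbackCone.IsLimit.mk _ (fun c =>
    (⟨pullback.lift c.fst.hom c.snd.hom (by rw [← PtHom.comp_hom, ← PtHom.comp_hom, c.condition]),
      by show _ ≫ pullback.fst f.hom g.hom ≫ P.p = c.pt.p
         rw [← Category.assoc, pullback.lift_fst]; exact c.fst.wp,
      by apply pullback.hom_ext
         · simp only [pbPt]; rw [Category.assoc, pullback.lift_fst, pullback.lift_fst]; exact c.fst.ws
         · simp only [pbPt]; rw [Category.assoc, pullback.lift_snd, pullback.lift_snd]; exact c.snd.ws⟩ : c.pt ⟶ pbPt f g))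
  · intro c; apply PtHom.ext; exact pullback.lift_fst _ _ _
  · intro c; apply PtHom.ext; exact pullback.lift_snd _ _ _
  · intro c m hm₁ hm₂
    apply PtHom.ext
    apply pullback.hom_ext
    · rw [pullback.lift_fst]; exact congrArg PtHom.hom hm₁
    · rw [pullback.lift_snd]; exact congrArg PtHom.hom hm₂

instance : HasLimit (cospan f g) :=
  HasLimit.mk ⟨_, pbIsLimit f g⟩

instance : HasPullbacks (Pt B) := hasPullbacks_of_hasLimit_cospan _

instance : HasFiniteLimits (Pt B) := hasFiniteLimits_of_hasTerminal_and_pullbacks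

end Pullbacks

end Pt

section Defs

variable {D : Type*} [Category D] [HasZeroMorphisms D] [HasFiniteLimits D]

/-- `(r₁, r₂) : R ⇉ A` is an internal equivalence relation. -/
structure IsEquivRelation {R A : D} (r₁ r₂ : R ⟶ A) : Prop where
  mono : Mono (prod.lift r₁ r₂)
  refl : ∃ e : A ⟶ R, e ≫ r₁ = 𝟙 A ∧ e ≫ r₂ = 𝟙 A
  symm : ∃ σ : R ⟶ R, σ ≫ r₁ = r₂ ∧ σ ≫ r₂ = r₁
  trans : ∃ τ : pullback r₂ r₁ ⟶ R,
    τ ≫ r₁ = pullback.fst r₂ r₁ ≫ r₁ ∧ τ ≫ r₂ = pullback.snd r₂ r₁ ≫ r₂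

/-- A monomorphism `k : X ⟶ A` is Bourn-normal if it is the zero class of some internal
equivalence relation on `A`, i.e. `k` is the pullback of the relation's pairing
`⟨r₁,r₂⟩ : R → A × A` along `⟨1,0⟩ : A → A × A`. -/
def BournNormal {X A : D} (k : X ⟶ A) : Prop :=
  Mono k ∧ ∃ (R : D) (r₁ r₂ : R ⟶ A) (_ : IsEquivRelation r₁ r₂) (κ : X ⟶ R),
    IsPullback κ k (prod.lift r₁ r₂) (prod.lift (𝟙 A) 0)

end Defs

variable (C) in
/-- A Mal'tsev category: every internal reflexive relation is an equivalence relation. -/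
class Maltsev : Prop where
  equiv_of_refl : ∀ {R A : C} (r₁ r₂ : R ⟶ A), Mono (prod.lift r₁ r₂) →
    (∃ e : A ⟶ R, e ≫ r₁ = 𝟙 A ∧ e ≫ r₂ = 𝟙 A) → IsEquivRelation r₁ r₂


attribute [local simp] prod.lift_fst prod.lift_snd prod.lift_fst_assoc prod.lift_snd_assoc

namespace Stmt15

@[simp] lemma zero_hom {B : C} {P Q : Pt B} : (0 : P ⟶ Q).hom = P.p ≫ Q.s := rfl

lemma mono_of_hom {B : C} {P Q : Pt B} (f : P ⟶ Q) (h : Mono f.hom) : Mono f := by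
  constructor
  intro T u v huv
  apply PtHom.ext
  rw [← cancel_mono f.hom, ← PtHom.comp_hom, ← PtHom.comp_hom, huv]

variable {R A : C} (r₁ r₂ : R ⟶ A) (e : A ⟶ R)

/-- `(a, x) ↦ (a, r x)`. -/
def sm (r : R ⟶ A) : A ⨯ R ⟶ A ⨯ A := prod.lift prod.fst (prod.snd ≫ r)

@[simp] lemma sm_fst (r : R ⟶ A) : sm r ≫ prod.fst = (prod.fst : A ⨯ R ⟶ A) :=
  prod.lift_fst _ _

@[simp] lemma sm_snd (r : R ⟶ A) : sm r ≫ prod.snd = prod.snd ≫ r :=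
  prod.lift_snd _ _

lemma sm_mono (h : Mono (prod.lift r₁ r₂)) : Mono (prod.lift (sm r₂) (sm r₁)) := by
  constructor
  intro Z u v huv
  have h1 : u ≫ sm r₂ = v ≫ sm r₂ := by
    have := huv =≫ prod.fst
    simpa using this
  have h2 : u ≫ sm r₁ = v ≫ sm r₁ := by
    have := huv =≫ prod.snd
    simpa using this
  have hfst : u ≫ prod.fst = v ≫ prod.fst := by
    have := h1 =≫ prod.fst
    simpa using this
  have hr₂ : u ≫ prod.snd ≫ r₂ = v ≫ prod.snd ≫ r₂ := by
    have := h1 =≫ prod.snd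
    simpa using this
  have hr₁ : u ≫ prod.snd ≫ r₁ = v ≫ prod.snd ≫ r₁ := by
    have := h2 =≫ prod.snd
    simpa using this
  have hsnd : u ≫ prod.snd = v ≫ prod.snd := by
    rw [← cancel_mono (prod.lift r₁ r₂), prod.comp_lift, prod.comp_lift]
    simp only [Category.assoc, hr₁, hr₂]
  exact Limits.prod.hom_ext hfst hsnd

lemma sm_refl (he₁ : e ≫ r₁ = 𝟙 A) (he₂ : e ≫ r₂ = 𝟙 A) :
    ∃ e' : A ⨯ A ⟶ A ⨯ R, e' ≫ sm r₂ = 𝟙 (A ⨯ A) ∧ e' ≫ sm r₁ = 𝟙 (A ⨯ A) := by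
  refine ⟨prod.lift prod.fst (prod.snd ≫ e), ?_, ?_⟩ <;>
    · apply Limits.prod.hom_ext <;> simp [sm, he₁, he₂]

/-- The point `(R, r₁, e)`. -/
abbrev PP (he₁ : e ≫ r₁ = 𝟙 A) : Pt A := ⟨R, r₁, e, he₁⟩

/-- The point `(A × A, π₁, Δ)`. -/
abbrev PQ (A : C) : Pt A := ⟨A ⨯ A, prod.fst, prod.lift (𝟙 A) (𝟙 A), prod.lift_fst _ _⟩

/-- The point `(A × R, π₁, ⟨1, e⟩)`. -/
abbrev PS (e : A ⟶ R) : Pt A := ⟨A ⨯ R, prod.fst, prod.lift (𝟙 A) e, prod.lift_fst _ _⟩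

/-- First leg of the relation on `(A × A, π₁, Δ)`: `(a,x) ↦ (a, r₂ x)`. -/
def S1 (he₂ : e ≫ r₂ = 𝟙 A) : PS e ⟶ PQ A :=
  ⟨sm r₂, prod.lift_fst _ _, by
    apply Limits.prod.hom_ext <;> simp [PS, PQ, sm, he₂]⟩

/-- Second leg of the relation: `(a,x) ↦ (a, r₁ x)`. -/
def S2 (he₁ : e ≫ r₁ = 𝟙 A) : PS e ⟶ PQ A :=
  ⟨sm r₁, prod.lift_fst _ _, by
    apply Limits.prod.hom_ext <;> simp [PS, PQ, sm, he₁]⟩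

@[simp] lemma S1_hom (he₂ : e ≫ r₂ = 𝟙 A) : (S1 r₂ e he₂).hom = sm r₂ := rfl
@[simp] lemma S2_hom (he₁ : e ≫ r₁ = 𝟙 A) : (S2 r₁ e he₁).hom = sm r₁ := rfl

/-- The inclusion of the zero class: `x ↦ (r₁ x, x)`. -/
def KK (he₁ : e ≫ r₁ = 𝟙 A) : PP r₁ e he₁ ⟶ PS e :=
  ⟨prod.lift r₁ (𝟙 R), prod.lift_fst _ _, by
    apply Limits.prod.hom_ext <;> simp [PP, PS, he₁]⟩

@[simp] lemma KK_hom (he₁ : e ≫ r₁ = 𝟙 A) : (KK r₁ e he₁).hom = prod.lift r₁ (𝟙 R) := rfl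

variable (he₁ : e ≫ r₁ = 𝟙 A) (he₂ : e ≫ r₂ = 𝟙 A)

/-- The relation `(S1, S2)` on `(A × A, π₁, Δ)` is an equivalence relation in `Pt A`. -/
lemma equivPt (hEq : IsEquivRelation (sm r₂) (sm (R := R) r₁)) :
    IsEquivRelation (S1 r₂ e he₂) (S2 r₁ e he₁) := by
  obtain ⟨hm⟩ := id hEq.mono
  constructor
  -- mono
  · constructor
    intro T u v huv
    have h1 : u ≫ S1 r₂ e he₂ = v ≫ S1 r₂ e he₂ := by
      have := huv =≫ prod.fst
      simpa using this
    have h2 : u ≫ S2 r₁ e he₁ = v ≫ S2 r₁ e he₁ := by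
      have := huv =≫ prod.snd
      simpa using this
    have h1' : u.hom ≫ sm r₂ = v.hom ≫ sm r₂ := by
      have := congrArg PtHom.hom h1
      simpa using this
    have h2' : u.hom ≫ sm r₁ = v.hom ≫ sm r₁ := by
      have := congrArg PtHom.hom h2
      simpa using this
    apply PtHom.ext
    apply hm
    rw [prod.comp_lift, prod.comp_lift, h1', h2']
  -- refl
  · refine ⟨⟨prod.lift prod.fst (prod.snd ≫ e), prod.lift_fst _ _, by
      apply Limits.prod.hom_ext <;> simp [PQ, PS]⟩, ?_, ?_⟩
    · apply PtHom.ext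
      show prod.lift prod.fst (prod.snd ≫ e) ≫ sm r₂ = 𝟙 (A ⨯ A)
      apply Limits.prod.hom_ext <;> simp [sm, he₂]
    · apply PtHom.ext
      show prod.lift prod.fst (prod.snd ≫ e) ≫ sm r₁ = 𝟙 (A ⨯ A)
      apply Limits.prod.hom_ext <;> simp [sm, he₁]
  -- symm
  · obtain ⟨σ, hσ₁, hσ₂⟩ := hEq.symm
    have hwp : σ ≫ (PS e).p = (PS e).p := by
      have := hσ₁ =≫ prod.fst
      simpa [PS] using this
    have hws : (PS e).s ≫ σ = (PS e).s := by
      apply hm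
      have a1 : (PS e).s ≫ sm r₁ = (PS e).s ≫ sm r₂ := by
        apply Limits.prod.hom_ext <;> simp [PS, sm, he₁, he₂]
      simp only [prod.comp_lift, Category.assoc, hσ₁, hσ₂, a1]
    refine ⟨⟨σ, hwp, hws⟩, ?_, ?_⟩
    · apply PtHom.ext; exact hσ₁
    · apply PtHom.ext; exact hσ₂
  -- trans
  · obtain ⟨τ, hτ₁, hτ₂⟩ := hEq.trans
    have hcond : (pullback.fst (S2 r₁ e he₁) (S1 r₂ e he₂)).hom ≫ sm r₁ =
        (pullback.snd (S2 r₁ e he₁) (S1 r₂ e he₂)).hom ≫ sm r₂ := by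
      have := congrArg PtHom.hom (pullback.condition (f := S2 r₁ e he₁) (g := S1 r₂ e he₂))
      simpa using this
    have hwp : (pullback.lift _ _ hcond ≫ τ) ≫ (PS e).p =
        (pullback (S2 r₁ e he₁) (S1 r₂ e he₂)).p := by
      have t1 : τ ≫ (prod.fst : A ⨯ R ⟶ A) = pullback.fst (sm r₁) (sm r₂) ≫ prod.fst := by
        have := hτ₁ =≫ prod.fst
        simpa using this
      show (pullback.lift _ _ hcond ≫ τ) ≫ (prod.fst : A ⨯ R ⟶ A) = _
      rw [Category.assoc, t1, pullback.lift_fst_assoc,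
        ← (pullback.fst (S2 r₁ e he₁) (S1 r₂ e he₂)).wp]
    have hws : (pullback (S2 r₁ e he₁) (S1 r₂ e he₂)).s ≫ (pullback.lift _ _ hcond ≫ τ) =
        (PS e).s := by
      apply hm
      simp only [prod.comp_lift, Category.assoc, hτ₁, hτ₂,
        pullback.lift_fst_assoc, pullback.lift_snd_assoc]
      rw [← Category.assoc, (pullback.fst (S2 r₁ e he₁) (S1 r₂ e he₂)).ws,
        ← Category.assoc, (pullback.snd (S2 r₁ e he₁) (S1 r₂ e he₂)).ws]
    refine ⟨⟨pullback.lift _ _ hcond ≫ τ, hwp, hws⟩, ?_, ?_⟩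
    · apply PtHom.ext
      show (pullback.lift _ _ hcond ≫ τ) ≫ sm r₂ =
        (pullback.fst (S2 r₁ e he₁) (S1 r₂ e he₂)).hom ≫ sm r₂
      rw [Category.assoc, hτ₁, pullback.lift_fst_assoc]
    · apply PtHom.ext
      show (pullback.lift _ _ hcond ≫ τ) ≫ sm r₁ =
        (pullback.snd (S2 r₁ e he₁) (S1 r₂ e he₂)).hom ≫ sm r₁
      rw [Category.assoc, hτ₂, pullback.lift_snd_assoc]

end Stmt15

/-- In a pointed Mal'tsev category, for an internal equivalence relation `(r₁,r₂) : R ⇉ A`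
with reflexivity splitting `e`, the pairing `⟨r₁,r₂⟩`, as a morphism
`(R, r₁, e) ⟶ (A × A, π₁, ⟨1,1⟩)` of the category `Pt A` of points over `A`, is a
Bourn-normal monomorphism in `Pt A`. -/
theorem stmt15 [HasZeroObject C] [Maltsev C]
    {R A : C} (r₁ r₂ : R ⟶ A) (hR : IsEquivRelation r₁ r₂)
    (e : A ⟶ R) (he₁ : e ≫ r₁ = 𝟙 A) (he₂ : e ≫ r₂ = 𝟙 A) :
    BournNormal (show (⟨R, r₁, e, he₁⟩ : Pt A) ⟶
        ⟨A ⨯ A, prod.fst, prod.lift (𝟙 A) (𝟙 A), prod.lift_fst _ _⟩ from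
      ⟨prod.lift r₁ r₂, prod.lift_fst _ _, by rw [prod.comp_lift, he₁, he₂]⟩) := by
  classical
  have hEq : IsEquivRelation (Stmt15.sm r₂) (Stmt15.sm (R := R) r₁) :=
    Maltsev.equiv_of_refl _ _ (Stmt15.sm_mono r₁ r₂ hR.mono) (Stmt15.sm_refl r₁ r₂ e he₁ he₂)
  refine ⟨Stmt15.mono_of_hom _ hR.mono, Stmt15.PS e, Stmt15.S1 r₂ e he₂, Stmt15.S2 r₁ e he₁,
    Stmt15.equivPt r₁ r₂ e he₁ he₂ hEq, Stmt15.KK r₁ e he₁, ?_⟩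
  set k : Stmt15.PP r₁ e he₁ ⟶ Stmt15.PQ A :=
    ⟨prod.lift r₁ r₂, prod.lift_fst _ _, by
      apply Limits.prod.hom_ext <;> simp [Stmt15.PP, Stmt15.PQ, he₁, he₂]⟩ with hk
  have hkmono : Mono k := Stmt15.mono_of_hom _ hR.mono
  have hc1 : Stmt15.KK r₁ e he₁ ≫ Stmt15.S1 r₂ e he₂ = k := by
    apply PtHom.ext
    show prod.lift r₁ (𝟙 R) ≫ Stmt15.sm r₂ = prod.lift r₁ r₂
    apply Limits.prod.hom_ext <;> simp [Stmt15.sm]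
  have hc2 : Stmt15.KK r₁ e he₁ ≫ Stmt15.S2 r₁ e he₁ = 0 := by
    apply PtHom.ext
    show prod.lift r₁ (𝟙 R) ≫ Stmt15.sm r₁ = (0 : Stmt15.PP r₁ e he₁ ⟶ Stmt15.PQ A).hom
    rw [Stmt15.zero_hom]
    show _ = r₁ ≫ prod.lift (𝟙 A) (𝟙 A)
    apply Limits.prod.hom_ext <;> simp [Stmt15.sm]
  have comm : Stmt15.KK r₁ e he₁ ≫ prod.lift (Stmt15.S1 r₂ e he₂) (Stmt15.S2 r₁ e he₁) =
      k ≫ prod.lift (𝟙 (Stmt15.PQ A)) 0 := by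
    apply Limits.prod.hom_ext
    · rw [Category.assoc, Category.assoc, prod.lift_fst, prod.lift_fst, Category.comp_id, hc1]
    · rw [Category.assoc, Category.assoc, prod.lift_snd, prod.lift_snd, comp_zero, hc2]
  refine IsPullback.of_isLimit (c := PullbackCone.mk _ _ comm) ?_
  apply PullbackCone.isLimitAux' (PullbackCone.mk _ _ comm)
  intro s
  have hA : s.fst ≫ Stmt15.S1 r₂ e he₂ = s.snd := by
    have := s.condition =≫ prod.fst
    simpa using this
  have hB : s.fst ≫ Stmt15.S2 r₁ e he₁ = 0 := by
    have := s.condition =≫ prod.snd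
    simpa using this
  have hA' : s.fst.hom ≫ Stmt15.sm r₂ = s.snd.hom := by
    have := congrArg PtHom.hom hA
    simpa using this
  have hB' : s.fst.hom ≫ Stmt15.sm r₁ = s.pt.p ≫ (Stmt15.PQ A).s := by
    have := congrArg PtHom.hom hB
    simpa using this
  have hwp1 : s.fst.hom ≫ prod.snd ≫ r₁ = s.pt.p := by
    have := hB' =≫ prod.snd
    simpa [Stmt15.PQ] using this
  have hsf : s.snd.hom ≫ (prod.fst : A ⨯ A ⟶ A) = s.pt.p := s.snd.wp
  have hfst : s.fst.hom ≫ prod.fst = s.pt.p := by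
    have h := hA' =≫ prod.fst
    simp only [Category.assoc, Stmt15.sm_fst] at h
    rw [h, hsf]
  have hr2 : s.fst.hom ≫ prod.snd ≫ r₂ = s.snd.hom ≫ prod.snd := by
    have := hA' =≫ prod.snd
    simpa using this
  refine ⟨⟨s.fst.hom ≫ prod.snd, ?_, ?_⟩, ?_, ?_, ?_⟩
  · show (s.fst.hom ≫ prod.snd) ≫ r₁ = s.pt.p
    rw [Category.assoc]; exact hwp1
  · show s.pt.s ≫ s.fst.hom ≫ prod.snd = e
    rw [← Category.assoc, s.fst.ws]
    show prod.lift (𝟙 A) e ≫ prod.snd = e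
    simp
  · apply PtHom.ext
    show (s.fst.hom ≫ prod.snd) ≫ prod.lift r₁ (𝟙 R) = s.fst.hom
    apply Limits.prod.hom_ext
    · rw [Category.assoc, prod.lift_fst, Category.assoc, hwp1, hfst]
    · simp
  · apply PtHom.ext
    show (s.fst.hom ≫ prod.snd) ≫ prod.lift r₁ r₂ = s.snd.hom
    apply Limits.prod.hom_ext
    · rw [Category.assoc, prod.lift_fst, Category.assoc, hwp1, hsf]
    · rw [Category.assoc, prod.lift_snd, Category.assoc, hr2]
  · intro m hm₁ hm₂
    have hlk : (⟨s.fst.hom ≫ prod.snd, by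
        show (s.fst.hom ≫ prod.snd) ≫ r₁ = s.pt.p
        rw [Category.assoc]; exact hwp1, by
        show s.pt.s ≫ s.fst.hom ≫ prod.snd = e
        rw [← Category.assoc, s.fst.ws]
        show prod.lift (𝟙 A) e ≫ prod.snd = e
        simp⟩ : s.pt ⟶ Stmt15.PP r₁ e he₁) ≫ k = s.snd := by
      apply PtHom.ext
      show (s.fst.hom ≫ prod.snd) ≫ prod.lift r₁ r₂ = s.snd.hom
      apply Limits.prod.hom_ext
      · rw [Category.assoc, prod.lift_fst, Category.assoc, hwp1, hsf]
      · rw [Category.assoc, prod.lift_snd, Category.assoc, hr2]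
    refine (cancel_mono k).1 ?_
    exact hm₂.trans hlk.symm
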